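/- arXiv:0901.4829 — 3 statements merged into one kernel-verified Lean document; each statement's English description precedes it below -/
import Mathlib

section
/- There exists u > 0 with F(u) > 0 if and only if ω < ω_{p,q}. -/
/-!
For `u > 0` one has `F(u) = u² (G(u) - ω/2)` with `G(u) = u^{p-1}/(p+1) - u^{q-1}/(q+1)`, so `F`
takes a positive value iff `ω/2 < sup G`. Weighted AM–GM with weights `(p-1)/(q-1)` and
`(q-p)/(q-1)` bounds `G` by `ω_{p,q}/2`, with equality at the critical point
`u₀ = ((p-1)(q+1)/((p+1)(q-1)))^{1/(q-p)}`, so `sup G = ω_{p,q}/2`.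
-/

/-- The double power nonlinearity `f(u) = -ω u + u^p - u^q`. -/
noncomputable def f (ω p q u : ℝ) : ℝ := -ω * u + u ^ p - u ^ q

/-- Its primitive `F(u) = ∫₀ᵘ f = -(ω/2)u² + u^{p+1}/(p+1) - u^{q+1}/(q+1)`. -/
noncomputable def F (ω p q u : ℝ) : ℝ :=
  -(ω / 2) * u ^ 2 + u ^ (p + 1) / (p + 1) - u ^ (q + 1) / (q + 1)

/-- The critical frequency `ω_{p,q}`. -/
noncomputable def omegaPQ (p q : ℝ) : ℝ :=
  (2 * (q - p) / ((p + 1) * (q - 1))) *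
    (((p - 1) * (q + 1)) / ((p + 1) * (q - 1))) ^ ((p - 1) / (q - p))

open Real

/-- Weighted AM–GM with weights `a / b`, `1 - a / b` applied to `y ^ (a - b) * x ^ b` and `y ^ a`;
equality holds at `x = y`. -/
lemma rpow_le_mul_rpow_add_mul_rpow {a b x y : ℝ} (ha : 0 < a) (hab : a < b) (hx : 0 ≤ x)
    (hy : 0 < y) : x ^ a ≤ a / b * y ^ (a - b) * x ^ b + (1 - a / b) * y ^ a := by
  have hb : 0 < b := ha.trans hab
  have hamgm := geom_mean_le_arith_mean2_weighted (div_pos ha hb).le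
    (sub_nonneg.2 ((div_le_one hb).2 hab.le)) (by positivity : 0 ≤ y ^ (a - b) * x ^ b)
    (rpow_pos_of_pos hy a).le (add_sub_cancel (a / b) 1)
  have hprod : (y ^ (a - b) * x ^ b) ^ (a / b) * (y ^ a) ^ (1 - a / b) = x ^ a := by
    rw [mul_rpow (rpow_pos_of_pos hy _).le (rpow_nonneg hx _), ← rpow_mul hy.le,
      ← rpow_mul hx, ← rpow_mul hy.le, mul_right_comm, ← rpow_add hy,
      mul_div_cancel₀ a hb.ne']
    convert one_mul (x ^ a) using 2
    convert rpow_zero y using 2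
    field_simp
    ring
  rw [hprod] at hamgm
  linarith

/-- The `ω`-free part of `F(u) / u²`. -/
noncomputable def G (p q u : ℝ) : ℝ := u ^ (p - 1) / (p + 1) - u ^ (q - 1) / (q + 1)

/-- The maximum point of `G p q` on `(0, ∞)`. -/
noncomputable def criticalPoint (p q : ℝ) : ℝ :=
  (((p - 1) * (q + 1)) / ((p + 1) * (q - 1))) ^ (1 / (q - p))

lemma criticalRatio_pos {p q : ℝ} (hp : 1 < p) (hpq : p < q) :
    0 < ((p - 1) * (q + 1)) / ((p + 1) * (q - 1)) := by
  have : 0 < p - 1 := by linarith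
  have : 0 < q - 1 := by linarith
  have : 0 < q + 1 := by linarith
  positivity

lemma criticalPoint_pos {p q : ℝ} (hp : 1 < p) (hpq : p < q) : 0 < criticalPoint p q :=
  rpow_pos_of_pos (criticalRatio_pos hp hpq) _

lemma criticalPoint_rpow_sub_eq {p q : ℝ} (hp : 1 < p) (hpq : p < q) :
    criticalPoint p q ^ (q - p) = ((p - 1) * (q + 1)) / ((p + 1) * (q - 1)) := by
  rw [criticalPoint, ← rpow_mul (criticalRatio_pos hp hpq).le,
    one_div_mul_cancel (by linarith), rpow_one]

lemma omegaPQ_eq {p q : ℝ} (hp : 1 < p) (hpq : p < q) :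
    omegaPQ p q = 2 * (q - p) / ((p + 1) * (q - 1)) * criticalPoint p q ^ (p - 1) := by
  rw [omegaPQ, criticalPoint, ← rpow_mul (criticalRatio_pos hp hpq).le, one_div_mul_eq_div]

lemma F_eq_sq_mul {ω p q u : ℝ} (hu : 0 < u) : F ω p q u = u ^ 2 * (G p q u - ω / 2) := by
  have hsq (r : ℝ) : u ^ (r + 1) = u ^ (r - 1) * u ^ 2 := by
    rw [← rpow_natCast u 2, ← rpow_add hu]
    ring_nf
  rw [F, G, hsq p, hsq q]
  ring

lemma G_criticalPoint {p q : ℝ} (hp : 1 < p) (hpq : p < q) :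
    G p q (criticalPoint p q) = omegaPQ p q / 2 := by
  have hu₀ := criticalPoint_pos hp hpq
  have hpow : criticalPoint p q ^ (q - 1) =
      ((p - 1) * (q + 1)) / ((p + 1) * (q - 1)) * criticalPoint p q ^ (p - 1) := by
    rw [← criticalPoint_rpow_sub_eq hp hpq, ← rpow_add hu₀]
    ring_nf
  have : q - 1 ≠ 0 := by linarith
  have : p + 1 ≠ 0 := by linarith
  have : q + 1 ≠ 0 := by linarith
  rw [G, hpow, omegaPQ_eq hp hpq]
  field_simp
  ring

lemma G_le_omegaPQ_half {p q u : ℝ} (hp : 1 < p) (hpq : p < q) (hu : 0 < u) :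
    G p q u ≤ omegaPQ p q / 2 := by
  have hu₀ := criticalPoint_pos hp hpq
  have hamgm := rpow_le_mul_rpow_add_mul_rpow (x := u) (sub_pos.2 hp)
    (sub_lt_sub_right hpq 1) hu.le hu₀
  have hcoeff : (p - 1) / (q - 1) * criticalPoint p q ^ (p - 1 - (q - 1)) = (p + 1) / (q + 1) := by
    rw [show p - 1 - (q - 1) = -(q - p) by ring, rpow_neg hu₀.le,
      criticalPoint_rpow_sub_eq hp hpq]
    have : p - 1 ≠ 0 := by linarith
    have : q - 1 ≠ 0 := by linarith
    have : p + 1 ≠ 0 := by linarith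
    have : q + 1 ≠ 0 := by linarith
    field_simp
  rw [hcoeff] at hamgm
  have : 0 < p + 1 := by linarith
  have : 0 < q + 1 := by linarith
  have : 0 < q - 1 := by linarith
  rw [G, omegaPQ_eq hp hpq, sub_le_iff_le_add, div_le_iff₀ (by linarith)]
  calc u ^ (p - 1) ≤ _ := hamgm
    _ = _ := by field_simp; ring

theorem exists_pos_F_iff_general (p q ω : ℝ) (hp : 1 < p) (hpq : p < q) :
    (∃ u : ℝ, 0 < u ∧ 0 < F ω p q u) ↔ ω < omegaPQ p q := by
  constructor
  · rintro ⟨u, hu, hFu⟩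
    rw [F_eq_sq_mul hu] at hFu
    linarith [pos_of_mul_pos_right hFu (sq_nonneg u), G_le_omegaPQ_half hp hpq hu]
  · intro hω
    have hu₀ := criticalPoint_pos hp hpq
    refine ⟨criticalPoint p q, hu₀, ?_⟩
    rw [F_eq_sq_mul hu₀, G_criticalPoint hp hpq]
    exact mul_pos (by positivity) (by linarith)

/-- There exists `u > 0` with `F(u) > 0` if and only if `ω < ω_{p,q}`. -/
theorem exists_pos_F_iff (p q ω : ℝ) (hp : 1 < p) (hpq : p < q) (hω : 0 < ω) :
    (∃ u : ℝ, 0 < u ∧ 0 < F ω p q u) ↔ ω < omegaPQ p q :=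
  exists_pos_F_iff_general p q ω hp hpq
end

section
/- Assume 0 < ω < ω_{p,q}. Let 0 < b < c be the positive zeros of f (so f < 0 on (0,b), f > 0 on (b,c), f < 0 on (c,∞)) and let 0 < β < θ be the positive zeros of F (so F < 0 на (0,β), F > 0 on (β,θ), F < 0 on (θ,∞)). Then b < β < c < θ. -/
section Primitive

variable {ω p q : ℝ}

theorem F_zero (hp : 0 ≤ p) (hq : 0 ≤ q) : F ω p q 0 = 0 := by
  simp [F, Real.zero_rpow (by linarith : p + 1 ≠ 0), Real.zero_rpow (by linarith : q + 1 ≠ 0)]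

/-- As `p + 1, q + 1 ≥ 1`, the power rule for `rpow` holds on all of `ℝ`, even at `0` and at
negative points, where `rpow` takes junk values. -/
theorem hasDerivAt_F (hp : 0 ≤ p) (hq : 0 ≤ q) (x : ℝ) :
    HasDerivAt (F ω p q) (f ω p q x) x := by
  have hpow (r : ℝ) (hr : 0 ≤ r) :
      HasDerivAt (fun u : ℝ => u ^ (r + 1) / (r + 1)) (x ^ r) x := by
    have h := (Real.hasDerivAt_rpow_const (x := x) (p := r + 1) (Or.inr (by linarith))).div_const
      (r + 1)
    rwa [add_sub_cancel_right, mul_div_cancel_left₀ _ (by linarith)] at h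
  have hquad : HasDerivAt (fun u : ℝ => -(ω / 2) * u ^ 2) (-ω * x) x := by
    refine ((hasDerivAt_pow 2 x).const_mul (-(ω / 2))).congr_deriv ?_
    norm_num
    ring
  exact (hquad.add (hpow p hp)).sub (hpow q hq)

theorem deriv_F (hp : 0 ≤ p) (hq : 0 ≤ q) : deriv (F ω p q) = f ω p q :=
  funext fun x => (hasDerivAt_F hp hq x).deriv

theorem strictMonoOn_F {s : Set ℝ} (hs : Convex ℝ s) (hp : 0 ≤ p) (hq : 0 ≤ q)
    (hf : ∀ x ∈ interior s, 0 < f ω p q x) : StrictMonoOn (F ω p q) s :=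
  strictMonoOn_of_deriv_pos hs (fun x _ => (hasDerivAt_F hp hq x).continuousAt.continuousWithinAt)
    (by rwa [deriv_F hp hq])

theorem strictAntiOn_F {s : Set ℝ} (hs : Convex ℝ s) (hp : 0 ≤ p) (hq : 0 ≤ q)
    (hf : ∀ x ∈ interior s, f ω p q x < 0) : StrictAntiOn (F ω p q) s :=
  strictAntiOn_of_deriv_neg hs (fun x _ => (hasDerivAt_F hp hq x).continuousAt.continuousWithinAt)
    (by rwa [deriv_F hp hq])

end Primitive

theorem zeros_interlace_general (p q ω : ℝ) (hp : 1 < p) (hpq : p < q)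
    (b c β θ : ℝ) (hβ : 0 < β) (hβθ : β < θ)
    (hf1 : ∀ u, 0 < u → u < b → f ω p q u < 0)
    (hf2 : ∀ u, b < u → u < c → 0 < f ω p q u)
    (hf3 : ∀ u, c < u → f ω p q u < 0)
    (hFβ : F ω p q β = 0)
    (hFθ : F ω p q θ = 0) :
    b < β ∧ β < c ∧ c < θ := by
  have hp0 : 0 ≤ p := by linarith
  have hq0 : 0 ≤ q := by linarith
  have hFβθ : F ω p q β = F ω p q θ := hFβ.trans hFθ.symm
  have hbβ : b < β := by
    by_contra! hβb
    have hanti := strictAntiOn_F (convex_Icc 0 b) hp0 hq0 (by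
      rw [interior_Icc]
      exact fun u hu => hf1 u hu.1 hu.2)
    exact hβ.ne (hanti.injOn ⟨le_rfl, hβ.le.trans hβb⟩ ⟨hβ.le, hβb⟩ (by rw [F_zero hp0 hq0, hFβ]))
  have hβc : β < c := by
    by_contra! hcβ
    have hanti := strictAntiOn_F (convex_Ici c) hp0 hq0 (by
      rw [interior_Ici]
      exact fun u hu => hf3 u hu)
    exact hβθ.ne (hanti.injOn hcβ (hcβ.trans hβθ.le) hFβθ)
  refine ⟨hbβ, hβc, ?_⟩
  by_contra! hθc
  have hmono := strictMonoOn_F (convex_Icc b c) hp0 hq0 (by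
    rw [interior_Icc]
    exact fun u hu => hf2 u hu.1 hu.2)
  exact hβθ.ne (hmono.injOn ⟨hbβ.le, hβc.le⟩ ⟨(hbβ.trans hβθ).le, hθc⟩ hFβθ)

/-- If `0 < b < c` are the positive zeros of `f` and `0 < β < θ` are the positive zeros
of `F`, then `b < β < c < θ`. -/
theorem zeros_interlace (p q ω : ℝ) (hp : 1 < p) (hpq : p < q) (hω : 0 < ω)
    (hωpq : ω < omegaPQ p q)
    (b c β θ : ℝ) (hb : 0 < b) (hbc : b < c) (hβ : 0 < β) (hβθ : β < θ)
    (hf1 : ∀ u, 0 < u → u < b → f ω p q u < 0)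
    (hfb : f ω p q b = 0)
    (hf2 : ∀ u, b < u → u < c → 0 < f ω p q u)
    (hfc : f ω p q c = 0)
    (hf3 : ∀ u, c < u → f ω p q u < 0)
    (hF1 : ∀ u, 0 < u → u < β → F ω p q u < 0)
    (hFβ : F ω p q β = 0)
    (hF2 : ∀ u, β < u → u < θ → 0 < F ω p q u)
    (hFθ : F ω p q θ = 0)
    (hF3 : ∀ u, θ < u → F ω p q u < 0) :
    b < β ∧ β < c ∧ c < θ :=
  zeros_interlace_general p q ω hp hpq b c β θ hβ hβθ hf1 hf2 hf3 hFβ hFθ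
end

section
/- Let n ≥ 1 be a natural number with n ≠ 2, and let 1 < p < q < p*(n). Then 2 < ((2n-(n-2)(p+1))/2) · ((2n-(n-2)(p+1))/(2n-(n-2)(q+1)))^{(p-1)/(q-p)}. -/
/-!
Put `A = 2n - (n-2)(p+1)`, `B = 2n - (n-2)(q+1)`, so that `A - 4 = -(n-2)(p-1)`,
`B - 4 = -(n-2)(q-1)` and the exponent `e = (p-1)/(q-p)` satisfies `e (A - B) = 4 - A`.
Taking logarithms, `4 < A (A/B)^e` becomes
`(A-4)(B-4)/(A-B) · (S B - S A) > 0`, where `S x = (log x - log 4)/(x - 4)` is the slope of a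
secant of `log` through `4`. Since `log` is strictly concave, `S` is strictly decreasing, and
`A - 4`, `B - 4` have the same sign because `n ≠ 2` and `p, q > 1`.
-/

open Real

theorem lt_mul_div_rpow_of_mul_sub_pos {A B c e : ℝ} (hc : 0 < c) (hA : 0 < A) (hB : 0 < B)
    (hAB : A ≠ B) (hABc : 0 < (A - c) * (B - c)) (he : e * (A - B) = c - A) :
    c < A * (A / B) ^ e := by
  have hAc : A ≠ c := fun h => by simp [h] at hABc
  have hBc : B ≠ c := fun h => by simp [h] at hABc
  set SA := (log A - log c) / (A - c)
  set SB := (log B - log c) / (B - c)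
  have hSA : log A - log c = (A - c) * SA := (mul_div_cancel₀ _ (sub_ne_zero.2 hAc)).symm
  have hSB : log B - log c = (B - c) * SB := (mul_div_cancel₀ _ (sub_ne_zero.2 hBc)).symm
  have slope_gap : 0 < (SB - SA) * (A - B) := by
    rcases hAB.lt_or_gt with h | h
    · exact mul_pos_of_neg_of_neg
        (sub_neg.2 (strictConcaveOn_log_Ioi.secant_strict_mono hc hA hB hAc hBc h))
        (sub_neg.2 h)
    · exact mul_pos
        (sub_pos.2 (strictConcaveOn_log_Ioi.secant_strict_mono hc hB hA hBc hAc h))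
        (sub_pos.2 h)
  clear_value SA SB
  have hlog : log c < log A + log (A / B) * e := by
    rw [log_div hA.ne' hB.ne']
    have key : (A - B) ^ 2 * (log A + (log A - log B) * e - log c)
        = (A - c) * (B - c) * ((SB - SA) * (A - B)) := by
      linear_combination (A - B) * (log A - log B) * he + ((A - B) ^ 2 + (A - B) * (c - A)) * hSA
        - (A - B) * (c - A) * hSB
    have := pos_of_mul_pos_right (key ▸ mul_pos hABc slope_gap) (sq_nonneg _)
    linarith
  calc c = exp (log c) := (exp_log hc).symm
    _ < exp (log A + log (A / B) * e) := exp_lt_exp.2 hlog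
    _ = A * (A / B) ^ e := by rw [exp_add, exp_log hA, rpow_def_of_pos (div_pos hA hB)]

theorem sub_mul_add_one_pos_of_lt_critical (n : ℕ) {r : ℝ} (hr : -1 < r)
    (hrn : 3 ≤ n → r < ((n : ℝ) + 2) / ((n : ℝ) - 2)) :
    0 < 2 * (n : ℝ) - ((n : ℝ) - 2) * (r + 1) := by
  rcases lt_or_ge n 3 with hn | hn
  · interval_cases n <;> norm_num <;> linarith
  · have hn' : (3 : ℝ) ≤ n := by exact_mod_cast hn
    have := (lt_div_iff₀ (by linarith)).1 (hrn hn)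
    linarith

theorem key_inequality_general (p q : ℝ) (n : ℕ) (hn2 : n ≠ 2)
    (hp : 1 < p) (hpq : p < q)
    (hq : 3 ≤ n → q < ((n : ℝ) + 2) / ((n : ℝ) - 2)) :
    2 < ((2 * (n : ℝ) - ((n : ℝ) - 2) * (p + 1)) / 2) *
      ((2 * (n : ℝ) - ((n : ℝ) - 2) * (p + 1)) /
        (2 * (n : ℝ) - ((n : ℝ) - 2) * (q + 1))) ^ ((p - 1) / (q - p)) := by
  have hc : (n : ℝ) - 2 ≠ 0 := sub_ne_zero.2 (by exact_mod_cast hn2)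
  have hqp : q - p ≠ 0 := sub_ne_zero.2 hpq.ne'
  have hA := sub_mul_add_one_pos_of_lt_critical n (r := p) (by linarith)
    fun hn => hpq.trans (hq hn)
  have hB := sub_mul_add_one_pos_of_lt_critical n (r := q) (by linarith) hq
  set A := 2 * (n : ℝ) - ((n : ℝ) - 2) * (p + 1)
  set B := 2 * (n : ℝ) - ((n : ℝ) - 2) * (q + 1)
  have hAB : A ≠ B := by
    rw [Ne, ← sub_eq_zero, show A - B = ((n : ℝ) - 2) * (q - p) by ring]
    exact mul_ne_zero hc hqp
  have hABc : 0 < (A - 4) * (B - 4) := by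
    rw [show (A - 4) * (B - 4) = ((n : ℝ) - 2) ^ 2 * ((p - 1) * (q - 1)) by ring]
    exact mul_pos (sq_pos_of_ne_zero hc) (mul_pos (by linarith) (by linarith))
  have four_lt := lt_mul_div_rpow_of_mul_sub_pos four_pos hA hB hAB hABc
    (e := (p - 1) / (q - p)) (by field_simp; ring)
  linarith

/-- For `n ≥ 1`, `n ≠ 2`, and `1 < p < q < p*(n)` (the subcriticality condition is
vacuous for `n = 1` where `p*(n) = ∞`), we have
`2 < ((2n-(n-2)(p+1))/2) · ((2n-(n-2)(p+1))/(2n-(n-2)(q+1)))^{(p-1)/(q-p)}`. -/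
theorem key_inequality (p q : ℝ) (n : ℕ) (hn : 1 ≤ n) (hn2 : n ≠ 2)
    (hp : 1 < p) (hpq : p < q)
    (hq : 3 ≤ n → q < ((n : ℝ) + 2) / ((n : ℝ) - 2)) :
    2 < ((2 * (n : ℝ) - ((n : ℝ) - 2) * (p + 1)) / 2) *
      ((2 * (n : ℝ) - ((n : ℝ) - 2) * (p + 1)) /
        (2 * (n : ℝ) - ((n : ℝ) - 2) * (q + 1))) ^ ((p - 1) / (q - p)) :=
  key_inequality_general p q n hn2 hp hpq hq
end
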